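/- arXiv:2511.11398 — 3 statements merged into one kernel-verified Lean document; each statement's English description precedes it below -/
import Mathlib

section
/- For a complex polynomial C(t) = Σ_i a_i t^i and a real number R > 0, set ‖C‖_R = Σ_i |a_i| R^i. Let μ ∈ ℂ, D ∈ ℕ and R > 0 satisfy D/R < |μ|, and define Δ v = μ·v + dv/dt on ℂ[t]. Then for every complex polynomial C with deg C ≤ D and every integer j ≥ 1: ‖C‖_R ≤ (|μ| − D/R)^{−j} · ‖Δ^j C‖_R. -/
/-!
Writing `μ p = Δ p - p'`, the triangle inequality for `‖·‖_R` together with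
`‖p'‖_R ≤ (deg p / R) ‖p‖_R` gives `(|μ| - D/R) ‖p‖_R ≤ ‖Δ p‖_R` whenever `deg p ≤ D`.
Since `Δ` does not raise the degree, this one-step estimate iterates.
-/

/-- The weighted `ℓ¹`-norm on complex polynomials: for `C(t) = Σ_i a_i t^i`,
`‖C‖_R = Σ_i |a_i| R^i`. -/
noncomputable def normR (R : ℝ) (C : Polynomial ℂ) : ℝ :=
  ∑ i ∈ C.support, ‖C.coeff i‖ * R ^ i

/-- The operator `Δ v = μ·v + dv/dt` on `ℂ[t]`. -/
noncomputable def DeltaOp (μ : ℂ) (v : Polynomial ℂ) : Polynomial ℂ :=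
  Polynomial.C μ * v + Polynomial.derivative v

open Polynomial Finset

section normR

variable {R : ℝ}

lemma normR_eq_sum_of_support_subset {p : ℂ[X]} {s : Finset ℕ} (h : p.support ⊆ s) :
    normR R p = ∑ i ∈ s, ‖p.coeff i‖ * R ^ i :=
  sum_subset h fun i _ hi => by simp [notMem_support_iff.mp hi]

lemma normR_nonneg (hR : 0 ≤ R) (p : ℂ[X]) : 0 ≤ normR R p := by
  unfold normR
  positivity

lemma normR_neg (p : ℂ[X]) : normR R (-p) = normR R p := by
  simp [normR]

lemma normR_C_mul (a : ℂ) (p : ℂ[X]) : normR R (C a * p) = ‖a‖ * normR R p := by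
  rw [normR_eq_sum_of_support_subset (smul_eq_C_mul a ▸ support_smul a p), normR, mul_sum]
  simp only [coeff_C_mul, norm_mul, mul_assoc]

lemma normR_add_le (hR : 0 ≤ R) (p q : ℂ[X]) :
    normR R (p + q) ≤ normR R p + normR R q := by
  rw [normR_eq_sum_of_support_subset support_add,
    normR_eq_sum_of_support_subset (p := p) subset_union_left,
    normR_eq_sum_of_support_subset (p := q) subset_union_right, ← sum_add_distrib]
  gcongr with i
  rw [← add_mul, coeff_add]
  exact mul_le_mul_of_nonneg_right (norm_add_le _ _) (pow_nonneg hR i)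

lemma normR_sub_le (hR : 0 ≤ R) (p q : ℂ[X]) :
    normR R (p - q) ≤ normR R p + normR R q := by
  simpa only [sub_eq_add_neg, normR_neg] using normR_add_le hR p (-q)

lemma sum_norm_coeff_succ_mul_pow_le_normR (p : ℂ[X]) :
    ∑ i ∈ range p.natDegree, ‖p.coeff (i + 1)‖ * R ^ (i + 1) ≤ normR R p := by
  rw [normR_eq_sum_of_support_subset supp_subset_range_natDegree_succ, sum_range_succ']
  exact le_add_of_nonneg_right (by positivity)

lemma normR_derivative_le (hR : 0 < R) (p : ℂ[X]) :
    normR R (derivative p) ≤ p.natDegree / R * normR R p := by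
  have hsupp : (derivative p).support ⊆ range p.natDegree := fun i hi => by
    rw [mem_support_iff, coeff_derivative] at hi
    exact mem_range.mpr (Nat.lt_of_succ_le (le_natDegree_of_ne_zero (left_ne_zero_of_mul hi)))
  calc normR R (derivative p)
      = ∑ i ∈ range p.natDegree, ‖p.coeff (i + 1)‖ * ((i + 1 : ℕ) * R ^ i) := by
        rw [normR_eq_sum_of_support_subset hsupp]
        simp only [coeff_derivative, norm_mul, ← Nat.cast_succ, Complex.norm_natCast, mul_assoc]
    _ ≤ ∑ i ∈ range p.natDegree, ‖p.coeff (i + 1)‖ * (p.natDegree / R * R ^ (i + 1)) := by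
        refine sum_le_sum fun i hi => mul_le_mul_of_nonneg_left ?_ (norm_nonneg _)
        rw [pow_succ, div_mul_eq_mul_div, ← mul_assoc, mul_div_cancel_right₀ _ hR.ne']
        gcongr
        exact_mod_cast mem_range.mp hi
    _ = p.natDegree / R * ∑ i ∈ range p.natDegree, ‖p.coeff (i + 1)‖ * R ^ (i + 1) := by
        rw [mul_sum]
        exact sum_congr rfl fun _ _ => mul_left_comm _ _ _
    _ ≤ p.natDegree / R * normR R p := by
        gcongr
        exact sum_norm_coeff_succ_mul_pow_le_normR p

end normR

section DeltaOp

variable {μ : ℂ}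

lemma natDegree_deltaOp_le (p : ℂ[X]) : (DeltaOp μ p).natDegree ≤ p.natDegree :=
  (natDegree_add_le _ _).trans <|
    max_le (natDegree_C_mul_le _ _) ((natDegree_derivative_le p).trans tsub_le_self)

lemma mul_normR_le_normR_deltaOp {R : ℝ} (hR : 0 < R) {D : ℕ} {p : ℂ[X]}
    (hdeg : p.natDegree ≤ D) :
    (‖μ‖ - D / R) * normR R p ≤ normR R (DeltaOp μ p) := by
  have hderiv : normR R (derivative p) ≤ D / R * normR R p :=
    (normR_derivative_le hR p).trans <| mul_le_mul_of_nonneg_right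
      (div_le_div_of_nonneg_right (by exact_mod_cast hdeg) hR.le) (normR_nonneg hR.le p)
  have hsplit : ‖μ‖ * normR R p ≤ normR R (DeltaOp μ p) + normR R (derivative p) := by
    rw [← normR_C_mul, show C μ * p = DeltaOp μ p - derivative p by simp [DeltaOp]]
    exact normR_sub_le hR.le _ _
  linarith

lemma pow_mul_normR_le_normR_iterate_deltaOp {R : ℝ} (hR : 0 < R) {D : ℕ}
    (hμ : D / R ≤ ‖μ‖) (j : ℕ) {p : ℂ[X]} (hdeg : p.natDegree ≤ D) :
    (‖μ‖ - D / R) ^ j * normR R p ≤ normR R ((DeltaOp μ)^[j] p) := by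
  induction j generalizing p with
  | zero => simp
  | succ j ih =>
    rw [pow_succ, mul_assoc, Function.iterate_succ_apply]
    calc (‖μ‖ - D / R) ^ j * ((‖μ‖ - D / R) * normR R p)
        ≤ (‖μ‖ - D / R) ^ j * normR R (DeltaOp μ p) :=
          mul_le_mul_of_nonneg_left (mul_normR_le_normR_deltaOp hR hdeg)
            (pow_nonneg (sub_nonneg.mpr hμ) j)
      _ ≤ normR R ((DeltaOp μ)^[j] (DeltaOp μ p)) :=
          ih ((natDegree_deltaOp_le p).trans hdeg)

end DeltaOp

theorem normR_le_iterate_delta_general (R : ℝ) (hR : 0 < R) (μ : ℂ) (D : ℕ)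
    (hμ : (D : ℝ) / R < ‖μ‖)
    (C : Polynomial ℂ) (hdeg : C.natDegree ≤ D) (j : ℕ) :
    normR R C ≤ (‖μ‖ - (D : ℝ) / R)⁻¹ ^ j * normR R ((DeltaOp μ)^[j] C) := by
  rw [inv_pow, inv_mul_eq_div, le_div_iff₀' (pow_pos (sub_pos.mpr hμ) j)]
  exact pow_mul_normR_le_normR_iterate_deltaOp hR hμ.le j hdeg

/-- If `D/R < |μ|` and `deg C ≤ D`, then for all `j ≥ 1`:
`‖C‖_R ≤ (|μ| − D/R)^{−j} ‖Δ^j C‖_R`. -/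
theorem normR_le_iterate_delta (R : ℝ) (hR : 0 < R) (μ : ℂ) (D : ℕ)
    (hμ : (D : ℝ) / R < ‖μ‖)
    (C : Polynomial ℂ) (hdeg : C.natDegree ≤ D) (j : ℕ) (hj : 1 ≤ j) :
    normR R C ≤ (‖μ‖ - (D : ℝ) / R)⁻¹ ^ j * normR R ((DeltaOp μ)^[j] C) :=
  normR_le_iterate_delta_general R hR μ D hμ C hdeg j
end

section
/- Let δ > 0 and let u, v ∈ ℂ satisfy Re u ≥ δ and Re v ≥ δ. Then |Γ(u)·Γ(v)/Γ(u+v)| ≤ Γ(δ)²/Γ(2δ), where Γ is the complex Gamma function. -/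
/-!
By the Beta integral, `Γ(u)Γ(v)/Γ(u+v) = ∫₀¹ t^(u-1) (1-t)^(v-1) dt`. The integrand has modulus
`t^(Re u - 1) (1-t)^(Re v - 1)`, which on `(0, 1)` decreases in `Re u` and `Re v`; so the modulus
of the integral is at most the real Beta integral at `(δ, δ)`, which is `Γ(δ)²/Γ(2δ)`.
-/

open MeasureTheory Set

namespace Complex

lemma norm_betaIntegrand {t : ℝ} (ht : t ∈ Ioo 0 1) (u v : ℂ) :
    ‖(t : ℂ) ^ (u - 1) * (1 - (t : ℂ)) ^ (v - 1)‖ = t ^ (u.re - 1) * (1 - t) ^ (v.re - 1) := by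
  have h1t : 0 < 1 - t := sub_pos.mpr ht.2
  rw [norm_mul, norm_cpow_eq_rpow_re_of_pos ht.1, ← ofReal_one, ← ofReal_sub,
    norm_cpow_eq_rpow_re_of_pos h1t]
  simp

lemma betaIntegral_ofReal (a b : ℝ) :
    betaIntegral a b = ↑(∫ t in (0 : ℝ)..1, t ^ (a - 1) * (1 - t) ^ (b - 1)) := by
  rw [betaIntegral, ← intervalIntegral.integral_ofReal]
  refine intervalIntegral.integral_congr fun t ht => ?_
  rw [uIcc_of_le zero_le_one] at ht
  push_cast
  rw [← ofReal_one, ← ofReal_sub, ← ofReal_sub, ofReal_cpow ht.1, ofReal_cpow (sub_nonneg.mpr ht.2)]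
  norm_cast

end Complex

namespace Real

lemma Gamma_mul_Gamma_div_eq_integral {a b : ℝ} (ha : 0 < a) (hb : 0 < b) :
    Gamma a * Gamma b / Gamma (a + b) = ∫ t in (0 : ℝ)..1, t ^ (a - 1) * (1 - t) ^ (b - 1) := by
  have hΓ : Gamma (a + b) ≠ 0 := (Gamma_pos_of_pos (add_pos ha hb)).ne'
  have hB := Complex.Gamma_mul_Gamma_eq_betaIntegral (s := a) (t := b) (by simpa) (by simpa)
  rw [← Complex.ofReal_add, Complex.Gamma_ofReal, Complex.Gamma_ofReal, Complex.Gamma_ofReal,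
    Complex.betaIntegral_ofReal] at hB
  rw [div_eq_iff hΓ, mul_comm _ (Gamma (a + b))]
  exact_mod_cast hB

end Real

namespace Complex

lemma intervalIntegrable_betaIntegrand_real {a b : ℝ} (ha : 0 < a) (hb : 0 < b) :
    IntervalIntegrable (fun t : ℝ => t ^ (a - 1) * (1 - t) ^ (b - 1)) volume 0 1 := by
  refine (betaIntegral_convergent (u := a) (v := b) (by simpa) (by simpa)).norm.congr_ae ?_
  rw [uIoc_of_le zero_le_one]
  filter_upwards [ae_restrict_mem measurableSet_Ioc, Ioo_ae_eq_Ioc.mem_iff] with t ht hIoo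
  simpa using norm_betaIntegrand (hIoo.mpr ht) a b

lemma norm_betaIntegral_le {a b : ℝ} (ha : 0 < a) (hb : 0 < b) {u v : ℂ} (hu : a ≤ u.re)
    (hv : b ≤ v.re) :
    ‖betaIntegral u v‖ ≤ ∫ t in (0 : ℝ)..1, t ^ (a - 1) * (1 - t) ^ (b - 1) := by
  refine intervalIntegral.norm_integral_le_of_norm_le zero_le_one ?_
    (intervalIntegrable_betaIntegrand_real ha hb)
  -- `t = 1` is excluded: there `0 ^ (v - 1) = 1` when `v = 1`, and the bound may fail.
  filter_upwards [Ioo_ae_eq_Ioc.mem_iff] with t hIoo ht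
  have ht' : t ∈ Ioo 0 1 := hIoo.mpr ht
  have h1t : 1 - t ∈ Ioo 0 1 := ⟨sub_pos.mpr ht'.2, sub_lt_self 1 ht'.1⟩
  rw [norm_betaIntegrand ht' u v]
  exact mul_le_mul (Real.rpow_le_rpow_of_exponent_ge ht'.1 ht'.2.le (by linarith))
    (Real.rpow_le_rpow_of_exponent_ge h1t.1 h1t.2.le (by linarith)) (Real.rpow_nonneg h1t.1.le _)
    (Real.rpow_nonneg ht'.1.le _)

lemma norm_Gamma_mul_Gamma_div_le {a b : ℝ} (ha : 0 < a) (hb : 0 < b) {u v : ℂ} (hu : a ≤ u.re)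
    (hv : b ≤ v.re) :
    ‖Gamma u * Gamma v / Gamma (u + v)‖ ≤ Real.Gamma a * Real.Gamma b / Real.Gamma (a + b) := by
  have hu₀ : 0 < u.re := ha.trans_le hu
  have hv₀ : 0 < v.re := hb.trans_le hv
  have hΓ : Gamma (u + v) ≠ 0 := Gamma_ne_zero_of_re_pos (by simpa using add_pos hu₀ hv₀)
  rw [Gamma_mul_Gamma_eq_betaIntegral hu₀ hv₀, mul_div_cancel_left₀ _ hΓ,
    Real.Gamma_mul_Gamma_div_eq_integral ha hb]
  exact norm_betaIntegral_le ha hb hu hv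

end Complex

/-- For `Re u ≥ δ > 0` and `Re v ≥ δ`: `|Γ(u)Γ(v)/Γ(u+v)| ≤ Γ(δ)²/Γ(2δ)`. -/
theorem abs_beta_le (δ : ℝ) (hδ : 0 < δ) (u v : ℂ) (hu : δ ≤ u.re) (hv : δ ≤ v.re) :
    ‖Complex.Gamma u * Complex.Gamma v / Complex.Gamma (u + v)‖ ≤
      (Real.Gamma δ) ^ 2 / Real.Gamma (2 * δ) := by
  simpa [sq, two_mul] using Complex.norm_Gamma_mul_Gamma_div_le hδ hδ hu hv
end

section
/- Let a ∈ ℂ with Re a > 0 and let δ > 0. Then there exists A > 0 such that for every z ∈ ℂ with Re z ≥ δ: |Γ(z)/Γ(z+a)| ≤ A·|z|^{−Re a}, where Γ is the complex Gamma function. -/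
/-!
By Gauss's formula, `Γ(z)/Γ(z+a)` is the limit of `n^(-a) ∏_{j ≤ n} (1 + a/(z+j))`. Each factor
has norm at most `exp (Re (a/w) + |a|²/(2|w|²))` with `w = z + j`, and `1/w` differs from
`log (w+1) - log w` by at most `1/(Re w)²`. Hence the product is bounded by the telescoped
`exp (Re (a (log (z+n+1) - log z)))`, which is `|(z+n+1)/z|^(Re a)` up to the factor
`exp (2π |Im a|)` coming from the arguments, times `exp` of a multiple of `∑ 1/(δ+j)²`.
Since `|z+n+1|/n → 1`, the limit is at most a constant times `|z|^(-Re a)`.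
-/

open Filter Topology

namespace Complex

theorem norm_one_add_le_exp (w : ℂ) : ‖1 + w‖ ≤ Real.exp (w.re + ‖w‖ ^ 2 / 2) := by
  have hsq : ‖1 + w‖ ^ 2 ≤ Real.exp (w.re + ‖w‖ ^ 2 / 2) ^ 2 :=
    calc ‖1 + w‖ ^ 2 = (2 * w.re + ‖w‖ ^ 2) + 1 := by
          rw [Complex.sq_norm, Complex.sq_norm, normSq_add, normSq_one, one_mul, conj_re]
          ring
      _ ≤ Real.exp (2 * w.re + ‖w‖ ^ 2) := Real.add_one_le_exp _
      _ = Real.exp (w.re + ‖w‖ ^ 2 / 2) ^ 2 := by rw [← Real.exp_nat_mul]; push_cast; ring_nf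
  exact (pow_le_pow_iff_left₀ (norm_nonneg _) (Real.exp_pos _).le two_ne_zero).1 hsq

theorem norm_log_add_one_sub_log_sub_inv_le {w : ℂ} (hw : 0 < w.re) :
    ‖log (w + 1) - log w - w⁻¹‖ ≤ 1 / w.re ^ 2 := by
  have hslit : ∀ t : ℝ, 0 ≤ t → w + t ∈ slitPlane := fun t ht ↦
    mem_slitPlane_iff.2 (Or.inl (by simp only [add_re, ofReal_re]; linarith))
  have hne : ∀ t : ℝ, 0 ≤ t → w + t ≠ 0 := fun t ht ↦ slitPlane_ne_zero (hslit t ht)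
  have hmvt := norm_image_sub_le_of_norm_deriv_le_segment_01'
    (f := fun t : ℝ ↦ log (w + t) - t * w⁻¹) (f' := fun t ↦ 1 / (w + t) - w⁻¹)
    (C := 1 / w.re ^ 2) (fun t ht ↦ ?_) (fun t ht ↦ ?_)
  · rw [sub_right_comm]; simpa using hmvt
  · have hshift : HasDerivAt (fun t : ℝ ↦ w + t) 1 t := by
      simpa using ((hasDerivAt_id t).ofReal_comp).const_add w
    have hlin : HasDerivAt (fun t : ℝ ↦ (t : ℂ) * w⁻¹) w⁻¹ t := by
      simpa using (hasDerivAt_id t).ofReal_comp.mul_const w⁻¹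
    exact ((hshift.clog_real (hslit t ht.1)).sub hlin).hasDerivWithinAt
  · have hwt := hne t ht.1
    have hw0 : w ≠ 0 := by simpa using hne 0 le_rfl
    have hre : w.re ≤ ‖w + t‖ :=
      calc w.re ≤ (w + t).re := by simp [ht.1]
        _ ≤ ‖w + t‖ := re_le_norm _
    have hderiv : 1 / (w + t) - w⁻¹ = -t / ((w + t) * w) := by
      field_simp
      ring
    rw [hderiv, norm_div, norm_mul, norm_neg, norm_real, Real.norm_of_nonneg ht.1, sq]
    exact div_le_div₀ zero_le_one ht.2.le (by positivity)
      (mul_le_mul hre (re_le_norm w) hw.le (norm_nonneg _))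

theorem norm_one_add_div_le_exp (a : ℂ) {w : ℂ} (hw : 0 < w.re) :
    ‖1 + a / w‖ ≤
      Real.exp ((a * (log (w + 1) - log w)).re + (‖a‖ + ‖a‖ ^ 2 / 2) / w.re ^ 2) := by
  have hre : (a / w).re ≤ (a * (log (w + 1) - log w)).re + ‖a‖ / w.re ^ 2 := by
    have herr : ‖a * (log (w + 1) - log w - w⁻¹)‖ ≤ ‖a‖ * (1 / w.re ^ 2) := by
      rw [norm_mul]
      exact mul_le_mul_of_nonneg_left (norm_log_add_one_sub_log_sub_inv_le hw) (norm_nonneg a)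
    have := neg_le_of_abs_le ((abs_re_le_norm _).trans herr)
    rw [mul_sub, sub_re, ← div_eq_mul_inv] at this
    linarith [mul_one_div ‖a‖ (w.re ^ 2)]
  have hsq : ‖a / w‖ ^ 2 ≤ ‖a‖ ^ 2 / w.re ^ 2 := by
    rw [norm_div, div_pow]
    exact div_le_div_of_nonneg_left (by positivity) (by positivity)
      (pow_le_pow_left₀ hw.le (re_le_norm w) 2)
  refine (norm_one_add_le_exp _).trans (Real.exp_le_exp.2 ?_)
  rw [add_div, ← add_assoc, div_div]
  have : ‖a / w‖ ^ 2 / 2 ≤ ‖a‖ ^ 2 / (2 * w.re ^ 2) := by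
    rw [mul_comm, ← div_div]; linarith
  linarith

theorem re_mul_log_sub_log_le (a u v : ℂ) :
    (a * (log u - log v)).re ≤ a.re * (Real.log ‖u‖ - Real.log ‖v‖) + 2 * Real.pi * |a.im| := by
  have harg : -(a.im * (arg u - arg v)) ≤ 2 * Real.pi * |a.im| := by
    calc -(a.im * (arg u - arg v)) ≤ |a.im| * |arg u - arg v| := by
          rw [← abs_mul]; exact neg_le_abs _
      _ ≤ |a.im| * (2 * Real.pi) := by
          gcongr
          linarith [abs_sub (arg u) (arg v), abs_arg_le_pi u, abs_arg_le_pi v]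
      _ = 2 * Real.pi * |a.im| := mul_comm _ _
  simp only [mul_re, sub_re, sub_im, log_re, log_im]
  linarith

theorem summable_one_div_add_natCast_sq {δ : ℝ} (hδ : 0 < δ) :
    Summable fun j : ℕ ↦ 1 / (δ + j) ^ 2 := by
  refine ((Real.summable_one_div_nat_add_rpow δ 2).2 one_lt_two).congr fun j ↦ ?_
  rw [abs_of_pos (by positivity), add_comm, Real.rpow_two]

noncomputable def gammaRatioConst (a : ℂ) (δ : ℝ) : ℝ :=
  Real.exp (2 * Real.pi * |a.im| + (‖a‖ + ‖a‖ ^ 2 / 2) * ∑' j : ℕ, 1 / (δ + j) ^ 2)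

theorem gammaRatioConst_pos (a : ℂ) (δ : ℝ) : 0 < gammaRatioConst a δ := Real.exp_pos _

theorem re_add_natCast_pos {z : ℂ} (hz : 0 < z.re) (j : ℕ) : 0 < (z + j).re := by
  simp only [add_re, natCast_re]
  positivity

theorem prod_norm_one_add_div_le (a : ℂ) {δ : ℝ} (hδ : 0 < δ) {z : ℂ} (hz : δ ≤ z.re)
    (n : ℕ) :
    ∏ j ∈ Finset.range n, ‖1 + a / (z + j)‖ ≤ gammaRatioConst a δ * (‖z + n‖ / ‖z‖) ^ a.re := by
  have hre := re_add_natCast_pos (hδ.trans_le hz)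
  have hz0 : z ≠ 0 := fun h ↦ by simpa [h] using hre 0
  have hzn : z + n ≠ 0 := fun h ↦ by simpa [h] using hre n
  have hsum : ∑ j ∈ Finset.range n, 1 / (z + j).re ^ 2 ≤ ∑' j : ℕ, 1 / (δ + j) ^ 2 := by
    refine (Finset.sum_le_sum fun j _ ↦ ?_).trans
      ((summable_one_div_add_natCast_sq hδ).sum_le_tsum _ fun j _ ↦ by positivity)
    gcongr
    simpa using hz
  have htel : ∑ j ∈ Finset.range n, (a * (log (z + j + 1) - log (z + j))).re =
      (a * (log (z + n) - log z)).re := by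
    have := Finset.sum_range_sub (fun j : ℕ ↦ log (z + j)) n
    push_cast [← add_assoc] at this
    rw [← re_sum, ← Finset.mul_sum, this, add_zero]
  calc ∏ j ∈ Finset.range n, ‖1 + a / (z + j)‖
      ≤ ∏ j ∈ Finset.range n,
          Real.exp ((a * (log (z + j + 1) - log (z + j))).re +
            (‖a‖ + ‖a‖ ^ 2 / 2) / (z + j).re ^ 2) :=
        Finset.prod_le_prod (fun _ _ ↦ norm_nonneg _)
          fun j _ ↦ norm_one_add_div_le_exp a (hre j)
    _ = Real.exp ((a * (log (z + n) - log z)).re +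
          (‖a‖ + ‖a‖ ^ 2 / 2) * ∑ j ∈ Finset.range n, 1 / (z + j).re ^ 2) := by
        rw [← Real.exp_sum, Finset.sum_add_distrib, htel, Finset.mul_sum]
        simp only [mul_one_div]
    _ ≤ Real.exp (a.re * (Real.log ‖z + n‖ - Real.log ‖z‖) + 2 * Real.pi * |a.im| +
          (‖a‖ + ‖a‖ ^ 2 / 2) * ∑' j : ℕ, 1 / (δ + j) ^ 2) := by
        gcongr
        exact re_mul_log_sub_log_le a _ _
    _ = gammaRatioConst a δ * (‖z + n‖ / ‖z‖) ^ a.re := by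
        rw [gammaRatioConst, Real.rpow_def_of_pos (by positivity), ← Real.exp_add,
          Real.log_div (by positivity) (by positivity)]
        congr 1
        ring

theorem GammaSeq_div_GammaSeq_add {z : ℂ} (hz : ∀ j : ℕ, z + j ≠ 0) (a : ℂ) {n : ℕ}
    (hn : n ≠ 0) :
    GammaSeq z n / GammaSeq (z + a) n =
      (n : ℂ) ^ (-a) * ∏ j ∈ Finset.range (n + 1), (1 + a / (z + j)) := by
  have hn' : (n : ℂ) ≠ 0 := Nat.cast_ne_zero.2 hn
  have hfac : (n.factorial : ℂ) ≠ 0 := Nat.cast_ne_zero.2 n.factorial_ne_zero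
  have hfactor : ∀ j : ℕ, 1 + a / (z + j) = (z + a + j) / (z + j) := fun j ↦ by
    field_simp [hz j]
    ring
  rw [show -a = z - (z + a) by ring, cpow_sub _ _ hn', Finset.prod_congr rfl fun j _ ↦ hfactor j,
    Finset.prod_div_distrib, GammaSeq, GammaSeq]
  field_simp

theorem norm_GammaSeq_div_GammaSeq_add_le (a : ℂ) {δ : ℝ} (hδ : 0 < δ) {z : ℂ}
    (hz : δ ≤ z.re) {n : ℕ} (hn : n ≠ 0) :
    ‖GammaSeq z n / GammaSeq (z + a) n‖ ≤
      gammaRatioConst a δ * ‖z‖ ^ (-a.re) * (‖z + 1 + n‖ / n) ^ a.re := by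
  have hre := re_add_natCast_pos (hδ.trans_le hz)
  have hz0 : 0 < ‖z‖ := by simpa using (hre 0).trans_le (re_le_norm _)
  rw [GammaSeq_div_GammaSeq_add (fun j h ↦ by simpa [h] using hre j) a hn, norm_mul, norm_prod,
    norm_natCast_cpow_of_pos (Nat.pos_of_ne_zero hn), neg_re]
  calc (n : ℝ) ^ (-a.re) * ∏ j ∈ Finset.range (n + 1), ‖1 + a / (z + j)‖
      ≤ (n : ℝ) ^ (-a.re) * (gammaRatioConst a δ * (‖z + ↑(n + 1)‖ / ‖z‖) ^ a.re) := by
        gcongr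
        exact prod_norm_one_add_div_le a hδ hz _
    _ = gammaRatioConst a δ * ‖z‖ ^ (-a.re) * (‖z + 1 + n‖ / n) ^ a.re := by
        rw [Real.div_rpow (norm_nonneg _) hz0.le, Real.div_rpow (norm_nonneg _) n.cast_nonneg,
          Real.rpow_neg hz0.le, Real.rpow_neg n.cast_nonneg]
        push_cast
        ring_nf

theorem tendsto_norm_add_natCast_div_natCast (w : ℂ) :
    Tendsto (fun n : ℕ ↦ ‖w + n‖ / n) atTop (𝓝 1) := by
  have h : Tendsto (fun n : ℕ ↦ ‖w * (n : ℂ)⁻¹ + 1‖) atTop (𝓝 1) := by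
    simpa using ((tendsto_inv_atTop_nhds_zero_nat (𝕜 := ℂ)).const_mul w).add_const 1 |>.norm
  refine h.congr' ((eventually_ne_atTop 0).mono fun n hn ↦ ?_)
  have hn' : (n : ℂ) ≠ 0 := Nat.cast_ne_zero.2 hn
  change _ = ‖w + n‖ / n
  rw [← norm_natCast n, ← norm_div]
  congr 1
  field_simp

end Complex

theorem gamma_ratio_bound_general (a : ℂ) (δ : ℝ) (hδ : 0 < δ) :
    ∃ A > (0 : ℝ), ∀ z : ℂ, δ ≤ z.re →
      ‖Complex.Gamma z / Complex.Gamma (z + a)‖ ≤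
        A * ‖z‖ ^ (-a.re) := by
  refine ⟨Complex.gammaRatioConst a δ, Complex.gammaRatioConst_pos a δ, fun z hz ↦ ?_⟩
  have hbound : 0 ≤ Complex.gammaRatioConst a δ * ‖z‖ ^ (-a.re) :=
    mul_nonneg (Complex.gammaRatioConst_pos a δ).le (Real.rpow_nonneg (norm_nonneg z) _)
  -- at a pole, `Complex.Gamma (z + a)` takes the junk value `0` and so does the quotient
  by_cases hpole : Complex.Gamma (z + a) = 0
  · simpa [hpole] using hbound
  have hlim := ((Complex.GammaSeq_tendsto_Gamma z).div
    (Complex.GammaSeq_tendsto_Gamma (z + a)) hpole).norm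
  have hlim_bound := ((Complex.tendsto_norm_add_natCast_div_natCast (z + 1)).rpow_const
    (p := a.re) (Or.inl one_ne_zero)).const_mul (Complex.gammaRatioConst a δ * ‖z‖ ^ (-a.re))
  rw [Real.one_rpow, mul_one] at hlim_bound
  exact le_of_tendsto_of_tendsto hlim hlim_bound <| (eventually_ne_atTop 0).mono
    fun n hn ↦ Complex.norm_GammaSeq_div_GammaSeq_add_le a hδ hz hn

/-- For fixed `a` with `Re a > 0` and `δ > 0`, there is `A > 0` such that for all `z`
with `Re z ≥ δ`: `|Γ(z)/Γ(z+a)| ≤ A·|z|^{−Re a}`. -/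
theorem gamma_ratio_bound (a : ℂ) (ha : 0 < a.re) (δ : ℝ) (hδ : 0 < δ) :
    ∃ A > (0 : ℝ), ∀ z : ℂ, δ ≤ z.re →
      ‖Complex.Gamma z / Complex.Gamma (z + a)‖ ≤
        A * ‖z‖ ^ (-a.re) :=
  gamma_ratio_bound_general a δ hδ
end
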